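/- arXiv:1905.09943 — 3 statements merged into one kernel-verified Lean document; each statement's English description precedes it below -/
import Mathlib

section
/- Let α > 0 and let x, y be non-negative integers with x + y > 0. If x·y = 0 then pGam(α, x+y) = pGam(α, x)·pGam(α, y). Otherwise, pGam(α, x+y) ≥ pGam(α, x)·pGam(α, y)·(1 + y/α). -/
/-- `pGam α x = Γ(x+α)/Γ(α)`. -/
noncomputable def pGam (α : ℝ) (x : ℕ) : ℝ := Real.Gamma (x + α) / Real.Gamma α

lemma pGam_eq (α : ℝ) (hα : 0 < α) (x : ℕ) :
    pGam α x = ∏ i ∈ Finset.range x, (α + i) := by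
  induction x with
  | zero => simp [pGam, div_self (Real.Gamma_pos_of_pos hα).ne']
  | succ n ih =>
    rw [Finset.prod_range_succ, ← ih, pGam, pGam]
    have h0 : (0:ℝ) < (n:ℝ) + α := by positivity
    have h : ((n+1:ℕ):ℝ) + α = ((n:ℝ) + α) + 1 := by push_cast; ring
    rw [h, Real.Gamma_add_one h0.ne']
    field_simp
    ring

theorem stmt_2 (α : ℝ) (hα : 0 < α) (x y : ℕ) (hxy : 0 < x + y) :
    (x * y = 0 → pGam α (x + y) = pGam α x * pGam α y) ∧
    (x * y ≠ 0 → pGam α (x + y) ≥ pGam α x * pGam α y * (1 + (y : ℝ) / α)) := by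
  have hΓ := pGam_eq α hα
  constructor
  · intro h
    rcases Nat.mul_eq_zero.mp h with h | h <;> subst h <;> simp [hΓ]
  · intro h
    have hx : 1 ≤ x := Nat.one_le_iff_ne_zero.mpr (fun hx => h (by simp [hx]))
    rw [ge_iff_le, hΓ, hΓ, hΓ, Finset.prod_range_add]
    have tel : (∏ j ∈ Finset.range y, (α + ((j:ℝ)+1))) * α
        = (∏ j ∈ Finset.range y, (α + j)) * (α + y) := by
      have h1 := Finset.prod_range_succ' (fun i : ℕ => α + (i:ℝ)) y
      have h2 := Finset.prod_range_succ (fun i : ℕ => α + (i:ℝ)) y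
      push_cast at h1
      rw [h2] at h1
      linarith [h1]
    have e1 : (∏ j ∈ Finset.range y, (α + j)) * (1 + (y:ℝ)/α)
        = ∏ j ∈ Finset.range y, (α + ((j:ℝ)+1)) := by
      field_simp
      linarith [tel]
    have key : (∏ j ∈ Finset.range y, (α + j)) * (1 + (y:ℝ)/α)
        ≤ ∏ j ∈ Finset.range y, (α + ((x + j : ℕ):ℝ)) := by
      rw [e1]
      apply Finset.prod_le_prod
      · intro j _; positivity
      · intro j _
        have : (1:ℝ) ≤ (x:ℝ) := by exact_mod_cast hx
        push_cast
        linarith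
    calc (∏ i ∈ Finset.range x, (α + i)) * (∏ i ∈ Finset.range y, (α + i)) * (1 + (y:ℝ)/α)
        = (∏ i ∈ Finset.range x, (α + i)) * ((∏ i ∈ Finset.range y, (α + i)) * (1 + (y:ℝ)/α)) := by ring
      _ ≤ (∏ i ∈ Finset.range x, (α + i)) * ∏ j ∈ Finset.range y, (α + ((x + j : ℕ):ℝ)) := by
          apply mul_le_mul_of_nonneg_left key
          apply Finset.prod_nonneg
          intro i _; positivity
end

section
/- Let α > 0 and let x₁ ≥ x₂ ≥ ... ≥ x_k be non-negative integers in decreasing order with x₁ > 0, and let k' ≤ k be the largest index with x_{k'} > 0. Then pGam(α, ∑_{l=1}^k x_l) ≥ (∏_{l=1}^k pGam(α, x_l)) · (∏_{l=1}^{k'-1} (1 + x_l/α)). -/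
section pGam

variable {α : ℝ}

lemma pGam_pos (hα : 0 < α) (n : ℕ) : 0 < pGam α n :=
  div_pos (Real.Gamma_pos_of_pos (by positivity)) (Real.Gamma_pos_of_pos hα)

lemma pGam_zero (hα : 0 < α) : pGam α 0 = 1 := by
  simp [pGam, (Real.Gamma_pos_of_pos hα).ne']

lemma pGam_one (hα : 0 < α) : pGam α 1 = α := by
  rw [pGam, Nat.cast_one, add_comm, Real.Gamma_add_one hα.ne']
  field_simp [(Real.Gamma_pos_of_pos hα).ne']

lemma pGam_add (hα : 0 < α) (a b : ℕ) : pGam α (a + b) = pGam α a * pGam (α + a) b := by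
  have hΓa : Real.Gamma (a + α) ≠ 0 := (Real.Gamma_pos_of_pos (by positivity)).ne'
  rw [pGam, pGam, pGam, Nat.cast_add]
  field_simp
  ring_nf

lemma pGam_succ (hα : 0 < α) (n : ℕ) : pGam α (n + 1) = α * pGam (α + 1) n := by
  rw [add_comm n, pGam_add hα, pGam_one hα, Nat.cast_one]

lemma pGam_le_pGam_of_le {β : ℝ} (hα : 0 < α) (hαβ : α ≤ β) (n : ℕ) :
    pGam α n ≤ pGam β n := by
  induction n generalizing α β with
  | zero => rw [pGam_zero hα, pGam_zero (hα.trans_le hαβ)]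
  | succ n ih =>
    rw [pGam_succ hα, pGam_succ (hα.trans_le hαβ)]
    exact mul_le_mul hαβ (ih (by positivity) (by linarith)) (pGam_pos (by positivity) n).le
      (hα.le.trans hαβ)

lemma pGam_mul_pGam_mul_le_pGam_add (hα : 0 < α) (a : ℕ) {b : ℕ} (hb : 0 < b) :
    pGam α a * pGam α b * (1 + a / α) ≤ pGam α (a + b) := by
  obtain ⟨m, rfl⟩ : ∃ m, b = m + 1 := ⟨b - 1, by omega⟩
  rw [pGam_add hα a (m + 1), pGam_succ hα, pGam_succ (by positivity)]
  have hshift : pGam (α + 1) m ≤ pGam (α + a + 1) m :=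
    pGam_le_pGam_of_le (by positivity) (by linarith [a.cast_nonneg (α := ℝ)]) m
  calc pGam α a * (α * pGam (α + 1) m) * (1 + a / α)
      = pGam α a * ((α + a) * pGam (α + 1) m) := by field_simp
    _ ≤ pGam α a * ((α + a) * pGam (α + a + 1) m) := by
      gcongr
      exact (pGam_pos hα a).le

lemma prod_pGam_mul_le_pGam_sum (hα : 0 < α) (x : ℕ → ℕ) (m : ℕ)
    (hx : ∀ l, 0 < l → l ≤ m → 0 < x l) :
    (∏ l ∈ Finset.range (m + 1), pGam α (x l)) * ∏ l ∈ Finset.range m, (1 + (x l : ℝ) / α) ≤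
      pGam α (∑ l ∈ Finset.range (m + 1), x l) := by
  induction m with
  | zero => simp
  | succ m ih =>
    set S := ∑ l ∈ Finset.range (m + 1), x l
    have hxS : (x m : ℝ) ≤ S := by
      exact_mod_cast Finset.single_le_sum (fun l _ => Nat.zero_le (x l))
        (Finset.self_mem_range_succ m)
    calc (∏ l ∈ Finset.range (m + 2), pGam α (x l)) *
          ∏ l ∈ Finset.range (m + 1), (1 + (x l : ℝ) / α)
        = ((∏ l ∈ Finset.range (m + 1), pGam α (x l)) *
            ∏ l ∈ Finset.range m, (1 + (x l : ℝ) / α)) *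
            pGam α (x (m + 1)) * (1 + (x m : ℝ) / α) := by
          rw [Finset.prod_range_succ (fun l => pGam α (x l)) (m + 1),
            Finset.prod_range_succ (fun l => 1 + (x l : ℝ) / α) m]
          ring
      _ ≤ pGam α S * pGam α (x (m + 1)) * (1 + (S : ℝ) / α) := by
          have := pGam_pos hα (x (m + 1))
          have := pGam_pos hα S
          gcongr
          exact ih fun l hl hlm => hx l hl (by omega)
      _ ≤ pGam α (∑ l ∈ Finset.range (m + 2), x l) := by
          rw [Finset.sum_range_succ _ (m + 1)]
          exact pGam_mul_pGam_mul_le_pGam_add hα S (hx (m + 1) m.succ_pos le_rfl)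

end pGam

theorem stmt_3_general (α : ℝ) (hα : 0 < α) (k : ℕ) (x : ℕ → ℕ) (k' : ℕ)
    (hdec : ∀ i j, i ≤ j → j < k → x j ≤ x i)
    (hk' : k' < k) (hk'pos : 0 < x k')
    (hk'max : ∀ l, k' < l → l < k → x l = 0) :
    pGam α (∑ l ∈ Finset.range k, x l) ≥
      (∏ l ∈ Finset.range k, pGam α (x l)) *
        ∏ l ∈ Finset.range k', (1 + (x l : ℝ) / α) := by
  have hsub : Finset.range (k' + 1) ⊆ Finset.range k := Finset.range_subset_range.mpr hk'
  have htail : ∀ l ∈ Finset.range k, l ∉ Finset.range (k' + 1) → x l = 0 := by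
    intro l hl hl'
    simp only [Finset.mem_range] at hl hl'
    exact hk'max l (by omega) hl
  rw [← Finset.sum_subset hsub htail,
    ← Finset.prod_subset hsub fun l hl hl' => by rw [htail l hl hl', pGam_zero hα]]
  exact prod_pGam_mul_le_pGam_sum hα x k' fun l _ hl => hk'pos.trans_le (hdec l k' hl hk')

/-- Counts `x 0 ≥ x 1 ≥ ... ≥ x (k-1)` (0-based) in decreasing order with `x 0 > 0`,
and `k'` the (0-based) largest index with a positive count. -/
theorem stmt_3 (α : ℝ) (hα : 0 < α) (k : ℕ) (x : ℕ → ℕ) (k' : ℕ)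
    (hdec : ∀ i j, i ≤ j → j < k → x j ≤ x i)
    (h1 : 0 < x 0) (hk' : k' < k) (hk'pos : 0 < x k')
    (hk'max : ∀ l, k' < l → l < k → x l = 0) :
    pGam α (∑ l ∈ Finset.range k, x l) ≥
      (∏ l ∈ Finset.range k, pGam α (x l)) *
        ∏ l ∈ Finset.range k', (1 + (x l : ℝ) / α) :=
  stmt_3_general α hα k x k' hdec hk' hk'pos hk'max
end

section
/- Let q ≥ 2 be an integer, let n_1, ..., n_q be non-negative integers with total n = ∑_k n_k > 0, and suppose no single n_k equals n (i.e., at least two of the n_k are positive). Define h(α) = -∑_{ℓ=0}^{n-1} log(ℓ + α) + ∑_{k=1}^{q} ∑_{ℓ=0}^{n_k - 1} log(ℓ·q + α). Then h is strictly concave on the interval (0, 1]; that is, its second derivative h''(α) = ∑_{ℓ=0}^{n-1} 1/(ℓ+α)² - ∑_{k=1}^{q} ∑_{ℓ=0}^{n_k-1} 1/(ℓq+α)² is negative for all 0 < α ≤ 1. -/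
/-!
The ℓ = 0 term of every nonempty inner sum on the right is `1 / α²`, and at least two inner
sums are nonempty, so the right-hand side is at least `2 / α²`. On the left, after the
ℓ = 0 term `1 / α²`, the tail telescopes against `1 / (ℓ + α) - 1 / (ℓ + 1 + α)` and stays
below `1 / α ≤ 1 / α²`.
-/

open Finset

theorem Finset.exists_ne_ne_zero_of_ne_sum {ι M : Type*} [DecidableEq ι] [AddCommMonoid M]
    {s : Finset ι} {f : ι → M} (hsum : ∑ i ∈ s, f i ≠ 0) (hne : ∀ i ∈ s, f i ≠ ∑ j ∈ s, f j) :
    ∃ i ∈ s, ∃ j ∈ s, i ≠ j ∧ f i ≠ 0 ∧ f j ≠ 0 := by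
  obtain ⟨i, hi, hfi⟩ := exists_ne_zero_of_sum_ne_zero hsum
  have hrest : ∑ j ∈ s.erase i, f j ≠ 0 := fun h ↦
    hne i hi (by rw [← add_sum_erase s f hi, h, add_zero])
  obtain ⟨j, hj, hfj⟩ := exists_ne_zero_of_sum_ne_zero hrest
  exact ⟨i, hi, j, mem_of_mem_erase hj, (ne_of_mem_erase hj).symm, hfi, hfj⟩

theorem Finset.add_le_sum_of_ne {ι M : Type*} [AddCommMonoid M] [PartialOrder M]
    [IsOrderedAddMonoid M] {s : Finset ι} {f : ι → M} (hf : ∀ i ∈ s, 0 ≤ f i) {i j : ι}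
    (hi : i ∈ s) (hj : j ∈ s) (hij : i ≠ j) : f i + f j ≤ ∑ k ∈ s, f k := by
  classical
  rw [← sum_pair hij]
  exact sum_le_sum_of_subset_of_nonneg (insert_subset hi (singleton_subset_iff.mpr hj))
    fun k hk _ ↦ hf k hk

theorem one_div_add_one_sq_le_sub {a : ℝ} (ha : 0 < a) :
    1 / (a + 1) ^ 2 ≤ 1 / a - 1 / (a + 1) := by
  rw [div_sub_div _ _ ha.ne' (by positivity), div_le_div_iff₀ (by positivity) (by positivity)]
  nlinarith

section

variable {α : ℝ}

theorem sum_range_one_div_succ_add_sq_le (hα : 0 < α) (m : ℕ) :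
    ∑ ℓ ∈ range m, 1 / ((ℓ : ℝ) + 1 + α) ^ 2 ≤ 1 / α - 1 / (m + α) := by
  induction m with
  | zero => simp
  | succ m ih =>
    have hstep := one_div_add_one_sq_le_sub (a := m + α) (by positivity)
    rw [add_right_comm] at hstep
    rw [sum_range_succ, Nat.cast_succ]
    linarith

theorem sum_range_one_div_add_sq_lt (hα : 0 < α) (N : ℕ) :
    ∑ ℓ ∈ range N, 1 / ((ℓ : ℝ) + α) ^ 2 < 1 / α ^ 2 + 1 / α := by
  cases N with
  | zero => simp only [range_zero, sum_empty]; positivity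
  | succ m =>
    rw [sum_range_succ']
    push_cast
    have htail := sum_range_one_div_succ_add_sq_le hα m
    have hpos : 0 < 1 / ((m : ℝ) + α) := by positivity
    simp only [zero_add]
    linarith

theorem one_div_sq_le_sum_range_mul_add (hα : 0 < α) {c : ℝ} (hc : 0 ≤ c) {n : ℕ} (hn : n ≠ 0) :
    1 / α ^ 2 ≤ ∑ ℓ ∈ range n, 1 / ((ℓ : ℝ) * c + α) ^ 2 := by
  have h := single_le_sum (f := fun ℓ : ℕ ↦ 1 / ((ℓ : ℝ) * c + α) ^ 2)
    (fun ℓ _ ↦ by positivity) (mem_range.mpr (Nat.pos_of_ne_zero hn))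
  rwa [Nat.cast_zero, zero_mul, zero_add] at h

end

theorem stmt_5_general (q : ℕ) (n : ℕ → ℕ)
    (hN : 0 < ∑ k ∈ Finset.range q, n k)
    (hne : ∀ k ∈ Finset.range q, n k ≠ ∑ l ∈ Finset.range q, n l) :
    ∀ α : ℝ, 0 < α → α ≤ 1 →
      (∑ ℓ ∈ Finset.range (∑ k ∈ Finset.range q, n k), 1 / ((ℓ : ℝ) + α) ^ 2) -
        ∑ k ∈ Finset.range q, ∑ ℓ ∈ Finset.range (n k), 1 / ((ℓ : ℝ) * q + α) ^ 2
      < 0 := by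
  intro α hα hα1
  obtain ⟨i, hi, j, hj, hij, hni, hnj⟩ := exists_ne_ne_zero_of_ne_sum hN.ne' hne
  have hq₀ : (0 : ℝ) ≤ q := q.cast_nonneg
  have hleft := sum_range_one_div_add_sq_lt hα (∑ k ∈ range q, n k)
  have hright := add_le_sum_of_ne
    (f := fun k ↦ ∑ ℓ ∈ range (n k), 1 / ((ℓ : ℝ) * q + α) ^ 2)
    (fun k _ ↦ sum_nonneg fun ℓ _ ↦ by positivity) hi hj hij
  have hinv : 1 / α ≤ 1 / α ^ 2 :=
    one_div_le_one_div_of_le (by positivity) (by nlinarith)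
  linarith [one_div_sq_le_sum_range_mul_add hα hq₀ hni,
    one_div_sq_le_sum_range_mul_add hα hq₀ hnj]

theorem stmt_5 (q : ℕ) (hq : 2 ≤ q) (n : ℕ → ℕ)
    (hN : 0 < ∑ k ∈ Finset.range q, n k)
    (hne : ∀ k ∈ Finset.range q, n k ≠ ∑ l ∈ Finset.range q, n l) :
    ∀ α : ℝ, 0 < α → α ≤ 1 →
      (∑ ℓ ∈ Finset.range (∑ k ∈ Finset.range q, n k), 1 / ((ℓ : ℝ) + α) ^ 2) -
        ∑ k ∈ Finset.range q, ∑ ℓ ∈ Finset.range (n k), 1 / ((ℓ : ℝ) * q + α) ^ 2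
      < 0 :=
  stmt_5_general q n hN hne
end
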